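/- Let Ω ⊆ ℂ be an open set, let y : Ω → ℝ be a C² function, and let A₂, A₃ : Ω → ℂ be functions. Define A₁ := y_z (the Wirtinger z-derivative of y). Assume that at every point of Ω: (i) 0 < y ≤ 4; (ii) A₁² + A₂² + A₃² = 0 (the conformality relation); and (iii) Δy = −2(conj(A₂)·A₃ + A₂·conj(A₃)) (equivalently ∂_z̄ A₁ = −(conj(A₂)·A₃ + A₂·conj(A₃))/2, the equation satisfied by the first coordinate of a conformal minimal immersion into Nil₃ in the coordinates (y₁,y₂,y₃)). Then the function φ := 1/y is subharmonic on Ω, i.e. Δ(1/y) ≥ 0 at every point of Ω. -/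

import Mathlib

/-!
In every direction `(1/y)'' = -y''/y² + 2y'²/y³`, so `Δ(1/y) = (2|∇y|² - yΔy)/y³`.
The minimal surface equation gives `Δy = -4 Re(conj A₂ · A₃)`, and conformality gives
`|∇y|² = 4|A₁|² = 4|A₂² + A₃²|`. Since
`|A₂² + A₃²|² = 4 (Re(conj A₂ · A₃))² + (|A₂|² - |A₃|²)²`, we get `|∇y|² ≥ 2|Δy|`, hence
`2|∇y|² - yΔy ≥ (4 - y)|Δy| ≥ 0`.
-/

/-- The Wirtinger `z`-derivative `f_z = (∂f/∂x − i·∂f/∂y)/2` of a real-valued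
function on `ℂ`, as a complex number. -/
noncomputable def wirtingerZ (f : ℂ → ℝ) (z : ℂ) : ℂ :=
  ((fderiv ℝ f z 1 : ℝ) - Complex.I * (fderiv ℝ f z Complex.I : ℝ)) / 2

/-- The Laplacian `Δf = ∂²f/∂x² + ∂²f/∂y²` of a real-valued function on `ℂ`. -/
noncomputable def lap (f : ℂ → ℝ) (z : ℂ) : ℝ :=
  fderiv ℝ (fun w => fderiv ℝ f w 1) z 1 +
    fderiv ℝ (fun w => fderiv ℝ f w Complex.I) z Complex.I

open Complex ComplexConjugate

section OneDiv

variable {E : Type*} [NormedAddCommGroup E] [NormedSpace ℝ E] {y : E → ℝ}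

theorem hasFDerivAt_one_div {w : E} {y' : E →L[ℝ] ℝ} (hy : HasFDerivAt y y' w) (hw : y w ≠ 0) :
    HasFDerivAt (fun t => 1 / y t) (-(y w ^ 2)⁻¹ • y') w := by
  simp only [one_div]
  exact ((hasFDerivAt_inv hw).comp w hy).congr_fderiv (by ext; simp [mul_comm])

theorem fderiv_fderiv_one_div_apply {z : E} (hy : ContDiffAt ℝ 2 y z) (hz : y z ≠ 0) (e : E) :
    fderiv ℝ (fun w => fderiv ℝ (fun t => 1 / y t) w e) z e =
      -fderiv ℝ (fun w => fderiv ℝ y w e) z e / y z ^ 2 + 2 * fderiv ℝ y z e ^ 2 / y z ^ 3 := by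
  have hdiff : ∀ᶠ w in nhds z, DifferentiableAt ℝ y w :=
    (hy.eventually (by simp)).mono fun w hw => hw.differentiableAt (by norm_num)
  have hne : ∀ᶠ w in nhds z, y w ≠ 0 := hy.continuousAt.eventually_ne hz
  have hfirst : (fun w => fderiv ℝ (fun t => 1 / y t) w e) =ᶠ[nhds z]
      fun w => -(1 / y w ^ 2 * fderiv ℝ y w e) := by
    filter_upwards [hdiff, hne] with w hw hw0
    rw [(hasFDerivAt_one_div hw.hasFDerivAt hw0).fderiv]
    simp
  have hy1 : HasFDerivAt y (fderiv ℝ y z) z := (hy.differentiableAt (by norm_num)).hasFDerivAt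
  have hdir : HasFDerivAt (fun w => fderiv ℝ y w e) (fderiv ℝ (fun w => fderiv ℝ y w e) z) z :=
    (((hy.fderiv_right (m := 1) (by norm_num)).differentiableAt (by norm_num)).clm_apply
      (differentiableAt_const e)).hasFDerivAt
  have hcoef := hasFDerivAt_one_div (y := fun w => y w ^ 2) (hy1.pow 2) (pow_ne_zero 2 hz)
  rw [hfirst.fderiv_eq, ((hcoef.fun_mul hdir).fun_neg).fderiv]
  simp only [one_div, Nat.add_one_sub_one, pow_one, nsmul_eq_mul, Nat.cast_ofNat, neg_add_rev,
    add_apply, neg_apply, smul_apply,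
    smul_eq_mul, neg_mul, mul_neg, neg_neg]
  field_simp
  ring

end OneDiv

theorem lap_one_div {y : ℂ → ℝ} {z : ℂ} (hy : ContDiffAt ℝ 2 y z) (hz : y z ≠ 0) :
    lap (fun w => 1 / y w) z =
      -lap y z / y z ^ 2 + 2 * (fderiv ℝ y z 1 ^ 2 + fderiv ℝ y z I ^ 2) / y z ^ 3 := by
  rw [lap, lap, fderiv_fderiv_one_div_apply hy hz, fderiv_fderiv_one_div_apply hy hz]
  ring

theorem sq_norm_wirtingerZ (f : ℂ → ℝ) (z : ℂ) :
    ‖wirtingerZ f z‖ ^ 2 = (fderiv ℝ f z 1 ^ 2 + fderiv ℝ f z I ^ 2) / 4 := by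
  rw [Complex.sq_norm, wirtingerZ, normSq_div, normSq_apply, normSq_apply]
  simp only [sub_re, ofReal_re, mul_re, I_re, zero_mul, I_im, ofReal_im, mul_zero, sub_self,
    sub_zero, sub_im, mul_im, one_mul, zero_add, zero_sub, mul_neg, neg_mul, neg_neg, re_ofNat,
    im_ofNat, add_zero]
  ring

theorem sq_norm_sq_add_sq (a b : ℂ) :
    ‖a ^ 2 + b ^ 2‖ ^ 2 = (2 * (conj a * b).re) ^ 2 + (normSq a - normSq b) ^ 2 := by
  rw [Complex.sq_norm]
  simp only [normSq_apply, pow_two, add_re, add_im, mul_re, mul_im, conj_re, conj_im]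
  ring

theorem two_mul_abs_re_conj_mul_le (a b : ℂ) : 2 * |(conj a * b).re| ≤ ‖a ^ 2 + b ^ 2‖ := by
  rw [← abs_two, ← abs_mul]
  exact abs_le_of_sq_le_sq (by nlinarith [sq_norm_sq_add_sq a b]) (norm_nonneg _)

/-- If `y` is `C²` on an open set `Ω ⊆ ℂ`, with `0 < y ≤ 4` on `Ω`, and if
`A₁ := y_z, A₂, A₃` satisfy the conformality relation `A₁² + A₂² + A₃² = 0` and
the minimal surface equation `Δy = −2(conj(A₂)·A₃ + A₂·conj(A₃))` on `Ω`, then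
`1/y` is subharmonic on `Ω`: its Laplacian is nonnegative at every point of `Ω`. -/
theorem nil_inv_y_subharmonic (Ω : Set ℂ) (hΩ : IsOpen Ω)
    (y : ℂ → ℝ) (hy : ContDiffOn ℝ 2 y Ω)
    (A₁ A₂ A₃ : ℂ → ℂ) (hA₁ : ∀ z ∈ Ω, A₁ z = wirtingerZ y z)
    (hy_pos : ∀ z ∈ Ω, 0 < y z) (hy_le : ∀ z ∈ Ω, y z ≤ 4)
    (hconf : ∀ z ∈ Ω, (A₁ z) ^ 2 + (A₂ z) ^ 2 + (A₃ z) ^ 2 = 0)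
    (hmin : ∀ z ∈ Ω, (lap y z : ℂ) =
      -2 * ((starRingEnd ℂ) (A₂ z) * A₃ z + A₂ z * (starRingEnd ℂ) (A₃ z))) :
    ∀ z ∈ Ω, 0 ≤ lap (fun w => 1 / y w) z := by
  intro z hz
  set ρ := (conj (A₂ z) * A₃ z).re
  set m := ‖A₂ z ^ 2 + A₃ z ^ 2‖
  have hlap : lap y z = -4 * ρ := by
    have h := hmin z hz
    rw [show A₂ z * conj (A₃ z) = conj (conj (A₂ z) * A₃ z) by simp [mul_comm], add_conj] at h
    apply ofReal_injective
    rw [h]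
    push_cast
    ring
  have hgrad : fderiv ℝ y z 1 ^ 2 + fderiv ℝ y z I ^ 2 = 4 * m := by
    have h : ‖A₁ z‖ ^ 2 = m := by
      rw [← norm_pow, show A₁ z ^ 2 = -(A₂ z ^ 2 + A₃ z ^ 2) by linear_combination hconf z hz,
        norm_neg]
    rw [hA₁ z hz, sq_norm_wirtingerZ] at h
    linarith
  have hρ : 2 * |ρ| ≤ m := two_mul_abs_re_conj_mul_le (A₂ z) (A₃ z)
  have hc : 0 < y z := hy_pos z hz
  rw [lap_one_div (hy.contDiffAt (hΩ.mem_nhds hz)) hc.ne', hlap, hgrad]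
  calc 0 ≤ (4 * ρ * y z + 8 * m) / y z ^ 3 := by
        refine div_nonneg ?_ (by positivity)
        nlinarith [mul_nonneg (sub_nonneg.2 (hy_le z hz)) (abs_nonneg ρ),
          mul_le_mul_of_nonneg_right (neg_abs_le ρ) hc.le]
    _ = -(-4 * ρ) / y z ^ 2 + 2 * (4 * m) / y z ^ 3 := by
        field_simp
        ring
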